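/- Fix an integer k ≥ 2, an integer n ≥ 2, and a real number α > 0. Set A = k·α + (k - 2), and define a(j) = -log((j + A)/(j + A - 1)) for integers j. Then the sum Σ_{j = k(n-2)+3}^{k(n-1)+2} a(j) equals -log((n + α)/(n + α - 1)), i.e. the block sum of k consecutive values a(j), all with the same parameter A = kα + (k-2), reproduces the value -log((n+α)/(n+α-1)). -/

import Mathlib

open Finset Real

theorem sum_range_log_add_succ_div {b : ℝ} (hb : 0 < b) (K : ℕ) :
    ∑ i ∈ range K, log ((b + i + 1) / (b + i)) = log ((b + K) / b) := by
  calc ∑ i ∈ range K, log ((b + i + 1) / (b + i))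
      = ∑ i ∈ range K, (log (b + (i + 1 : ℕ)) - log (b + i)) :=
        sum_congr rfl fun i _ => by
          rw [log_div (by positivity) (by positivity)]
          push_cast
          ring_nf
    _ = log (b + K) - log b := by simpa using sum_range_sub (fun i : ℕ => log (b + i)) K
    _ = log ((b + K) / b) := (log_div (by positivity) hb.ne').symm

theorem stmt1 (k n : ℕ) (hk : 2 ≤ k) (hn : 2 ≤ n) (α : ℝ) (hα : 0 < α)
    (A : ℝ) (hA : A = k * α + ((k : ℝ) - 2))
    (a : ℕ → ℝ) (ha : ∀ j : ℕ, a j = -Real.log (((j : ℝ) + A) / ((j : ℝ) + A - 1))) :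
    ∑ j ∈ Finset.Icc (k * (n - 2) + 3) (k * (n - 1) + 2), a j
      = -Real.log (((n : ℝ) + α) / ((n : ℝ) + α - 1)) := by
  obtain ⟨m, rfl⟩ := Nat.exists_eq_add_of_le' hn
  have hk0 : (k : ℝ) ≠ 0 := by positivity
  -- the block consists of the `k` indices `k * m + 3 + i`, where `j + A - 1 = b + i`
  set b : ℝ := k * (m + 1 + α)
  have hblock : ∀ i : ℕ, a (k * m + 3 + i) = -log ((b + i + 1) / (b + i)) := fun i => by
    rw [ha, hA]
    congr 3 <;> push_cast <;> ring
  have hcard : k * (m + 2 - 1) + 2 + 1 - (k * (m + 2 - 2) + 3) = k := by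
    rw [show m + 2 - 1 = m + 1 by omega, Nat.add_sub_cancel, mul_add_one]
    omega
  rw [← Ico_add_one_right_eq_Icc, sum_Ico_eq_sum_range, hcard, Nat.add_sub_cancel]
  simp only [hblock, sum_neg_distrib, sum_range_log_add_succ_div (by positivity : 0 < b)]
  rw [show b + k = k * (m + 2 + α) by ring, mul_div_mul_left _ _ hk0]
  push_cast
  ring_nf
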